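/- arXiv:2404.06141 — 10 statements merged into one kernel-verified Lean document; each statement's English description precedes it below -/
import Mathlib

section
/- Let I ⊆ ℝ be an interval and φ : I → ℝ twice differentiable with φ(r) > 0 and φ(r)² + φ'(r)² + 2φ(r)φ''(r) = 1 for all r ∈ I. Then u := φ^{3/2} is twice differentiable on I and satisfies u''(r) = (3/4)(u(r)^{−1/3} − u(r)) for all r ∈ I. -/
/-! Since `φ > 0`, the chain rule for `φ ^ p` applies twice. For `p = 3/2` the second derivative is
`(3/4) φ^{-1/2} (2φφ'' + φ'²)`, and the ODE turns `2φφ'' + φ'²` into `1 - φ²`, which gives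
`(3/4)(φ^{-1/2} - φ^{3/2}) = (3/4)(u^{-1/3} - u)`. -/

open Real

theorem HasDerivAt.hasDerivAt_deriv_rpow_const {f f' : ℝ → ℝ} {f'' x p : ℝ}
    (hf : HasDerivAt f (f' x) x) (hf' : HasDerivAt f' f'' x) (hx : f x ≠ 0) :
    HasDerivAt (fun y => f' y * p * f y ^ (p - 1))
      (f'' * p * f x ^ (p - 1) + f' x ^ 2 * p * (p - 1) * f x ^ (p - 2)) x := by
  refine ((hf'.mul_const p).fun_mul (hf.rpow_const (p := p - 1) (Or.inl hx))).congr_deriv ?_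
  rw [show p - 1 - 1 = p - 2 by ring]
  ring

theorem rpow_three_halves_second_deriv_eq {a b c : ℝ} (ha : 0 < a)
    (h : a ^ 2 + b ^ 2 + 2 * (a * c) = 1) :
    c * (3 / 2) * a ^ ((3 : ℝ) / 2 - 1) + b ^ 2 * (3 / 2) * (3 / 2 - 1) * a ^ ((3 : ℝ) / 2 - 2) =
      3 / 4 * ((a ^ ((3 : ℝ) / 2)) ^ (-(1 : ℝ) / 3) - a ^ ((3 : ℝ) / 2)) := by
  set s := a ^ (-(1 : ℝ) / 2)
  have h_half : a ^ ((3 : ℝ) / 2 - 1) = s * a := by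
    rw [← rpow_add_one ha.ne']; norm_num
  have h_three_halves : a ^ ((3 : ℝ) / 2) = s * a ^ 2 := by
    rw [← rpow_natCast, ← rpow_add ha]; norm_num
  have h_inv : (a ^ ((3 : ℝ) / 2)) ^ (-(1 : ℝ) / 3) = s := by
    rw [← rpow_mul ha.le]; congr 1; norm_num
  rw [h_inv, h_three_halves, h_half, show (3 : ℝ) / 2 - 2 = -1 / 2 by norm_num]
  linear_combination 3 / 4 * s * h

theorem stmt_4_general (I : Set ℝ)
    (φ φ' φ'' : ℝ → ℝ)
    (hφ1 : ∀ r ∈ I, HasDerivAt φ (φ' r) r)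
    (hφ2 : ∀ r ∈ I, HasDerivAt φ' (φ'' r) r)
    (hpos : ∀ r ∈ I, 0 < φ r)
    (hode : ∀ r ∈ I, (φ r) ^ 2 + (φ' r) ^ 2 + 2 * (φ r * φ'' r) = 1)
    (u : ℝ → ℝ) (hu : u = fun r => φ r ^ ((3 : ℝ) / 2)) :
    ∃ u' u'' : ℝ → ℝ, ∀ r ∈ I,
      HasDerivAt u (u' r) r ∧ HasDerivAt u' (u'' r) r ∧
      u'' r = (3 / 4) * ((u r) ^ (-(1 : ℝ) / 3) - u r) := by
  subst hu
  refine ⟨fun r => φ' r * (3 / 2) * φ r ^ ((3 : ℝ) / 2 - 1),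
    fun r => φ'' r * (3 / 2) * φ r ^ ((3 : ℝ) / 2 - 1) +
      φ' r ^ 2 * (3 / 2) * (3 / 2 - 1) * φ r ^ ((3 : ℝ) / 2 - 2),
    fun r hr => ⟨?_, ?_, ?_⟩⟩
  · exact (hφ1 r hr).rpow_const (Or.inl (hpos r hr).ne')
  · exact (hφ1 r hr).hasDerivAt_deriv_rpow_const (hφ2 r hr) (hpos r hr).ne'
  · exact rpow_three_halves_second_deriv_eq (hpos r hr) (hode r hr)

/-- If `φ > 0` is twice differentiable on an interval `I` and satisfies
`φ² + (φ')² + 2φφ'' = 1`, then `u = φ^{3/2}` is twice differentiable on `I` and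
satisfies `u'' = (3/4)(u^{-1/3} - u)`. -/
theorem stmt_4 (I : Set ℝ) (hI : I.OrdConnected)
    (φ φ' φ'' : ℝ → ℝ)
    (hφ1 : ∀ r ∈ I, HasDerivAt φ (φ' r) r)
    (hφ2 : ∀ r ∈ I, HasDerivAt φ' (φ'' r) r)
    (hpos : ∀ r ∈ I, 0 < φ r)
    (hode : ∀ r ∈ I, (φ r) ^ 2 + (φ' r) ^ 2 + 2 * (φ r * φ'' r) = 1)
    (u : ℝ → ℝ) (hu : u = fun r => φ r ^ ((3 : ℝ) / 2)) :
    ∃ u' u'' : ℝ → ℝ, ∀ r ∈ I,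
      HasDerivAt u (u' r) r ∧ HasDerivAt u' (u'' r) r ∧
      u'' r = (3 / 4) * ((u r) ^ (-(1 : ℝ) / 3) - u r) :=
  stmt_4_general I φ φ' φ'' hφ1 hφ2 hpos hode u hu
end

section
/- Let I ⊆ ℝ be an interval and u : I → ℝ twice differentiable with u(r) > 0 and u''(r) = (3/4)(u(r)^{−1/3} − u(r)) for all r ∈ I. Then the function r ↦ 3u(r)² + 4u'(r)² − 9u(r)^{2/3} is constant on I. -/
/-!
The equation is Newton's law `u'' = V'(u)` for the potential `V x = (9/8) x^{2/3} - (3/8) x²`,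
so the energy `(u')² - 2 V(u)` has zero derivative; four times the energy is the stated quantity.
-/

theorem Set.OrdConnected.eq_of_forall_hasDerivAt_zero {E : Type*} [NormedAddCommGroup E]
    [NormedSpace ℝ E] {s : Set ℝ} (hs : s.OrdConnected) {f : ℝ → E}
    (hf : ∀ x ∈ s, HasDerivAt f 0 x) {x y : ℝ} (hx : x ∈ s) (hy : y ∈ s) : f x = f y := by
  have hle : ‖f x - f y‖ ≤ 0 * ‖x - y‖ :=
    (convex_iff_ordConnected.mpr hs).norm_image_sub_le_of_norm_hasDerivWithin_le
      (fun t ht => (hf t ht).hasDerivWithinAt) (fun _ _ => by simp) hy hx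
  rw [zero_mul, norm_le_zero_iff, sub_eq_zero] at hle
  exact hle

theorem hasDerivAt_energy {u u' V : ℝ → ℝ} {r a : ℝ} (hu : HasDerivAt u (u' r) r)
    (hu' : HasDerivAt u' a r) (hV : HasDerivAt V a (u r)) :
    HasDerivAt (fun t => u' t ^ 2 - 2 * V (u t)) 0 r := by
  refine ((hu'.fun_pow 2).sub ((hV.comp r hu).const_mul 2)).congr_deriv ?_
  ring

noncomputable def solitonPotential (x : ℝ) : ℝ :=
  9 / 8 * x ^ ((2 : ℝ) / 3) - 3 / 8 * x ^ 2

theorem hasDerivAt_solitonPotential {x : ℝ} (hx : 0 < x) :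
    HasDerivAt solitonPotential ((3 / 4) * (x ^ (-(1 : ℝ) / 3) - x)) x := by
  have hrpow : HasDerivAt (fun y : ℝ => y ^ ((2 : ℝ) / 3)) (2 / 3 * x ^ (-(1 : ℝ) / 3)) x := by
    convert Real.hasDerivAt_rpow_const (p := 2 / 3) (Or.inl hx.ne') using 2
    norm_num
  refine ((hrpow.const_mul (9 / 8)).sub ((hasDerivAt_pow 2 x).const_mul (3 / 8))).congr_deriv ?_
  ring

/-- Along a positive twice differentiable solution of `u'' = (3/4)(u^{-1/3} - u)` on an
interval `I`, the quantity `3u² + 4(u')² - 9u^{2/3}` is constant. -/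
theorem stmt_5 (I : Set ℝ) (hI : I.OrdConnected)
    (u u' : ℝ → ℝ)
    (hu : ∀ r ∈ I, HasDerivAt u (u' r) r)
    (hu' : ∀ r ∈ I,
      HasDerivAt u' ((3 / 4) * ((u r) ^ (-(1 : ℝ) / 3) - u r)) r)
    (hpos : ∀ r ∈ I, 0 < u r) :
    ∀ r ∈ I, ∀ s ∈ I,
      3 * (u r) ^ 2 + 4 * (u' r) ^ 2 - 9 * (u r) ^ ((2 : ℝ) / 3)
        = 3 * (u s) ^ 2 + 4 * (u' s) ^ 2 - 9 * (u s) ^ ((2 : ℝ) / 3) := by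
  intro r hr s hs
  have henergy := hI.eq_of_forall_hasDerivAt_zero (fun t ht =>
    hasDerivAt_energy (hu t ht) (hu' t ht) (hasDerivAt_solitonPotential (hpos t ht))) hr hs
  simp only [solitonPotential] at henergy
  linear_combination 4 * henergy
end

section
/- There is no twice differentiable function u : [0, ∞) → ℝ satisfying u''(r) = (3/4)(u(r)^{−1/3} − u(r)) for all r ≥ 0, with 0 < u(r) < 1 for all r ≥ 0 and u'(0) > 0. -/
/-! Since `0 < u < 1` makes `u^{-1/3} > 1 > u`, the equation forces `u'' ≥ 0`, so `u' ≥ u'(0) > 0`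
and `u` grows at least linearly: `u(r) ≥ u(0) + u'(0) r`. At `r = 1 / u'(0)` this exceeds `1`. -/

open Set

theorem mul_sub_le_sub_of_hasDerivWithinAt_Ici {f f' : ℝ → ℝ} {a C x : ℝ}
    (hf : ∀ y ∈ Ici a, HasDerivWithinAt f (f' y) (Ici a) y) (hC : ∀ y ∈ Ici a, C ≤ f' y)
    (hx : a ≤ x) : C * (x - a) ≤ f x - f a := by
  have hderiv : ∀ y ∈ interior (Ici a), HasDerivAt f (f' y) y := fun y hy =>
    (hf y (interior_subset hy)).hasDerivAt (mem_interior_iff_mem_nhds.mp hy)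
  refine (convex_Ici a).mul_sub_le_image_sub_of_le_deriv
    (fun y hy => (hf y hy).continuousWithinAt)
    (fun y hy => (hderiv y hy).differentiableAt.differentiableWithinAt)
    (fun y hy => (hderiv y hy).deriv ▸ hC y (interior_subset hy)) a self_mem_Ici x hx hx

/-- There is no twice differentiable `u : [0, ∞) → ℝ` with
`u'' = (3/4)(u^{-1/3} - u)`, `0 < u < 1` everywhere, and `u'(0) > 0`. -/
theorem stmt_6 :
    ¬ ∃ u u' u'' : ℝ → ℝ,
      (∀ r ∈ Set.Ici (0 : ℝ), HasDerivWithinAt u (u' r) (Set.Ici 0) r) ∧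
      (∀ r ∈ Set.Ici (0 : ℝ), HasDerivWithinAt u' (u'' r) (Set.Ici 0) r) ∧
      (∀ r ∈ Set.Ici (0 : ℝ),
        u'' r = (3 / 4) * ((u r) ^ (-(1 : ℝ) / 3) - u r)) ∧
      (∀ r ∈ Set.Ici (0 : ℝ), 0 < u r ∧ u r < 1) ∧
      0 < u' 0 := by
  rintro ⟨u, u', u'', hu, hu', hode, hbnd, hpos⟩
  have hconvex : ∀ r ∈ Ici (0 : ℝ), 0 ≤ u'' r := fun r hr => by
    obtain ⟨hu0, hu1⟩ := hbnd r hr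
    have : 1 < u r ^ (-(1 : ℝ) / 3) :=
      Real.one_lt_rpow_of_pos_of_lt_one_of_neg hu0 hu1 (by norm_num)
    rw [hode r hr]
    linarith
  have hslope : ∀ r ∈ Ici (0 : ℝ), u' 0 ≤ u' r := fun r hr => by
    have := mul_sub_le_sub_of_hasDerivWithinAt_Ici hu' hconvex hr
    linarith
  have hgrowth := mul_sub_le_sub_of_hasDerivWithinAt_Ici hu hslope (inv_pos.mpr hpos).le
  rw [sub_zero, mul_inv_cancel₀ hpos.ne'] at hgrowth
  linarith [(hbnd 0 self_mem_Ici).1, (hbnd (u' 0)⁻¹ (inv_pos.mpr hpos).le).2]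
end

section
/- There is no twice differentiable function u : [0, ∞) → ℝ satisfying u''(r) = (3/4)(u(r)^{−1/3} − u(r)) for all r ≥ 0 with u(r) > 1 for all r ≥ 0. -/
/-!
Since `u > 1`, the right-hand side is negative, so `u` is concave. A concave function on
`[0, ∞)` that is bounded below cannot have a negative slope anywhere (it would then lie below a
line of negative slope), so `u` is nondecreasing. Hence `u ≥ u 0 > 1`, and as `x ↦ x^{-1/3} - x`
is decreasing, `u''` is bounded above by the negative constant `(3/4)(u(0)^{-1/3} - u(0))`.
Then `u'` eventually becomes negative, a contradiction.
-/

open Set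

section Derivative

variable {f f' : ℝ → ℝ}

theorem Convex.monotoneOn_of_hasDerivWithinAt_nonneg {D : Set ℝ} (hD : Convex ℝ D)
    (hf : ∀ x ∈ D, HasDerivWithinAt f (f' x) D x) (hf'₀ : ∀ x ∈ D, 0 ≤ f' x) :
    MonotoneOn f D :=
  _root_.monotoneOn_of_hasDerivWithinAt_nonneg hD (fun x hx => (hf x hx).continuousWithinAt)
    (fun x hx => (hf x (interior_subset hx)).mono interior_subset)
    (fun x hx => hf'₀ x (interior_subset hx))

theorem Convex.antitoneOn_of_hasDerivWithinAt_nonpos {D : Set ℝ} (hD : Convex ℝ D)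
    (hf : ∀ x ∈ D, HasDerivWithinAt f (f' x) D x) (hf'₀ : ∀ x ∈ D, f' x ≤ 0) :
    AntitoneOn f D :=
  _root_.antitoneOn_of_hasDerivWithinAt_nonpos hD (fun x hx => (hf x hx).continuousWithinAt)
    (fun x hx => (hf x (interior_subset hx)).mono interior_subset)
    (fun x hx => hf'₀ x (interior_subset hx))

variable {a C : ℝ}

theorem exists_lt_of_hasDerivWithinAt_Ici_le_neg
    (hf : ∀ x ∈ Ici a, HasDerivWithinAt f (f' x) (Ici a) x) (hC : C < 0)
    (hf' : ∀ x ∈ Ici a, f' x ≤ C) (M : ℝ) : ∃ y ∈ Ici a, f y < M := by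
  have hanti : AntitoneOn (fun x => f x - C * x) (Ici a) :=
    (convex_Ici a).antitoneOn_of_hasDerivWithinAt_nonpos
      (fun x hx => (hf x hx).sub ((hasDerivWithinAt_id x _).const_mul C) |>.congr_deriv
        (by simp))
      (fun x hx => sub_nonpos.2 (hf' x hx))
  set y := a + (|f a - M| + 1) / -C
  have hay : a ≤ y := le_add_of_nonneg_right (div_nonneg (by positivity) (by linarith))
  have hCy : C * (y - a) = -(|f a - M| + 1) := by
    simp only [y, add_sub_cancel_left]
    field_simp [hC.ne]
  refine ⟨y, hay, ?_⟩
  calc f y ≤ f a + C * (y - a) := by linarith [hanti self_mem_Ici hay hay]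
    _ = f a - (|f a - M| + 1) := by rw [hCy]; ring
    _ < M := by linarith [le_abs_self (f a - M)]

theorem nonneg_of_hasDerivWithinAt_Ici_of_antitoneOn_of_le {M : ℝ}
    (hf : ∀ x ∈ Ici a, HasDerivWithinAt f (f' x) (Ici a) x) (hf' : AntitoneOn f' (Ici a))
    (hM : ∀ x ∈ Ici a, M ≤ f x) : ∀ x ∈ Ici a, 0 ≤ f' x := by
  by_contra! ⟨t, ht, hneg⟩
  have hsub : Ici t ⊆ Ici a := Ici_subset_Ici.2 ht
  obtain ⟨y, hy, hlt⟩ := exists_lt_of_hasDerivWithinAt_Ici_le_neg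
    (fun x hx => (hf x (hsub hx)).mono hsub) hneg
    (fun x hx => hf' ht (hsub hx) hx) M
  exact (hM y (hsub hy)).not_gt hlt

end Derivative

theorem rpow_sub_self_neg {p x : ℝ} (hp : p ≤ 0) (hx : 1 < x) : x ^ p - x < 0 :=
  sub_neg.2 ((Real.rpow_le_one_of_one_le_of_nonpos hx.le hp).trans_lt hx)

theorem antitoneOn_rpow_sub_self {p : ℝ} (hp : p ≤ 0) :
    AntitoneOn (fun x : ℝ => x ^ p - x) (Ioi 0) :=
  fun _ hx _ _ hxy => sub_le_sub (Real.rpow_le_rpow_of_nonpos hx hxy hp) hxy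

/-- There is no twice differentiable `u : [0, ∞) → ℝ` with
`u'' = (3/4)(u^{-1/3} - u)` and `u > 1` everywhere. -/
theorem stmt_7 :
    ¬ ∃ u u' u'' : ℝ → ℝ,
      (∀ r ∈ Set.Ici (0 : ℝ), HasDerivWithinAt u (u' r) (Set.Ici 0) r) ∧
      (∀ r ∈ Set.Ici (0 : ℝ), HasDerivWithinAt u' (u'' r) (Set.Ici 0) r) ∧
      (∀ r ∈ Set.Ici (0 : ℝ),
        u'' r = (3 / 4) * ((u r) ^ (-(1 : ℝ) / 3) - u r)) ∧
      (∀ r ∈ Set.Ici (0 : ℝ), 1 < u r) := by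
  rintro ⟨u, u', u'', hu, hu', heq, hgt⟩
  have hp : -(1 : ℝ) / 3 ≤ 0 := by norm_num
  have hu'_anti : AntitoneOn u' (Ici 0) :=
    (convex_Ici 0).antitoneOn_of_hasDerivWithinAt_nonpos hu' fun r hr => by
      rw [heq r hr]
      linarith [rpow_sub_self_neg hp (hgt r hr)]
  have hu'_nonneg : ∀ r ∈ Ici (0 : ℝ), 0 ≤ u' r :=
    nonneg_of_hasDerivWithinAt_Ici_of_antitoneOn_of_le hu hu'_anti fun r hr => (hgt r hr).le
  have hu_mono : MonotoneOn u (Ici 0) :=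
    (convex_Ici 0).monotoneOn_of_hasDerivWithinAt_nonneg hu hu'_nonneg
  have hu''_le : ∀ r ∈ Ici (0 : ℝ), u'' r ≤ (3 / 4) * (u 0 ^ (-(1 : ℝ) / 3) - u 0) := by
    intro r hr
    rw [heq r hr]
    have h0 : (0 : ℝ) < u 0 := one_pos.trans (hgt 0 self_mem_Ici)
    have h0r : u 0 ≤ u r := hu_mono self_mem_Ici hr hr
    linarith [antitoneOn_rpow_sub_self hp h0 (h0.trans_le h0r) h0r]
  obtain ⟨y, hy, hlt⟩ := exists_lt_of_hasDerivWithinAt_Ici_le_neg hu'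
    (by linarith [rpow_sub_self_neg hp (hgt 0 self_mem_Ici)]) hu''_le 0
  exact (hu'_nonneg y hy).not_gt hlt
end

section
/- There is no twice differentiable function u : [0, ∞) → ℝ satisfying u''(r) = (3/4)(u(r)^{−1/3} − u(r)) for all r ≥ 0, with u(r) > 0 for all r ≥ 0, u'(0) > 0, and the zero-energy condition 3u(0)² + 4u'(0)² = 9u(0)^{2/3}. -/
open Set Real

/-!
Conservation of the energy `3u² + 4u'² - 9u^{2/3}` propagates the zero-energy condition from
`r = 0` to all `r ≥ 0`. On a zero-energy solution, `g = u^{2/3}` solves the harmonic oscillator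
`g'' = -g/3`, so its Wronskian with `sin (r/√3)` is constant; comparing it at `r = 0` and
`r = √3 π` gives `g 0 + g (√3 π) = 0`, impossible for `g > 0`.
-/

lemma eq_of_forall_hasDerivWithinAt_Ici_zero {f : ℝ → ℝ} {a : ℝ}
    (hf : ∀ r ∈ Ici a, HasDerivWithinAt f 0 (Ici a) r) {r : ℝ} (hr : a ≤ r) : f r = f a :=
  constant_of_has_deriv_right_zero
    (fun x hx => (hf x hx.1).continuousWithinAt.mono Icc_subset_Ici_self)
    (fun x hx => (hf x hx.1).mono (Ici_subset_Ici.2 hx.1)) r ⟨hr, le_rfl⟩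

lemma apply_zero_add_apply_pi_div_eq_zero_of_harmonic {g g' : ℝ → ℝ} {k : ℝ} (hk : 0 < k)
    (hg : ∀ r ∈ Ici (0 : ℝ), HasDerivWithinAt g (g' r) (Ici 0) r)
    (hg' : ∀ r ∈ Ici (0 : ℝ), HasDerivWithinAt g' (-(k ^ 2 * g r)) (Ici 0) r) :
    g 0 + g (π / k) = 0 := by
  let W : ℝ → ℝ := fun r => g' r * sin (k * r) - k * (g r * cos (k * r))
  have hW : ∀ r ∈ Ici (0 : ℝ), HasDerivWithinAt W 0 (Ici 0) r := by
    intro r hr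
    have hkr : HasDerivAt (fun x => k * x) k r := by simpa using (hasDerivAt_id r).const_mul k
    have hsin := (hkr.sin).hasDerivWithinAt (s := Ici 0)
    have hcos := (hkr.cos).hasDerivWithinAt (s := Ici 0)
    exact (((hg' r hr).mul hsin).sub (((hg r hr).mul hcos).const_mul k)).congr_deriv (by ring)
  have hWpi := eq_of_forall_hasDerivWithinAt_Ici_zero hW (div_nonneg pi_pos.le hk.le)
  simp only [W, mul_div_cancel₀ π hk.ne', sin_pi, cos_pi, mul_zero, sin_zero, cos_zero] at hWpi
  have hsum : k * (g 0 + g (π / k)) = 0 := by linear_combination hWpi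
  exact (mul_eq_zero.1 hsum).resolve_left hk.ne'

lemma pow_three_rpow_div_three {p : ℝ} (hp : 0 ≤ p) (z : ℝ) : (p ^ 3) ^ (z / 3) = p ^ z := by
  rw [← rpow_natCast_mul hp]; congr 1; push_cast; ring

lemma exists_pow_three_eq {a : ℝ} (ha : 0 < a) : ∃ p, 0 < p ∧ a = p ^ 3 :=
  ⟨a ^ ((3 : ℕ)⁻¹ : ℝ), by positivity, (rpow_inv_natCast_pow ha.le three_ne_zero).symm⟩

noncomputable def solitonEnergy (a b : ℝ) : ℝ := 3 * a ^ 2 + 4 * b ^ 2 - 9 * a ^ ((2 : ℝ) / 3)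

section SolitonODE

variable {u u' u'' : ℝ → ℝ}
  (hu : ∀ r ∈ Ici (0 : ℝ), HasDerivWithinAt u (u' r) (Ici 0) r)
  (hu' : ∀ r ∈ Ici (0 : ℝ), HasDerivWithinAt u' (u'' r) (Ici 0) r)
  (hode : ∀ r ∈ Ici (0 : ℝ), u'' r = 3 / 4 * (u r ^ (-(1 : ℝ) / 3) - u r))
  (hpos : ∀ r ∈ Ici (0 : ℝ), 0 < u r)

include hu hu' hode hpos

lemma solitonEnergy_eq_at_zero {r : ℝ} (hr : 0 ≤ r) :
    solitonEnergy (u r) (u' r) = solitonEnergy (u 0) (u' 0) := by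
  refine eq_of_forall_hasDerivWithinAt_Ici_zero (f := fun r => solitonEnergy (u r) (u' r))
    (fun r hr => ?_) hr
  have h := ((((hu r hr).pow 2).const_mul 3).add (((hu' r hr).pow 2).const_mul 4)).sub
    (((hu r hr).rpow_const (p := (2 : ℝ) / 3) (.inl (hpos r hr).ne')).const_mul 9)
  refine h.congr_deriv ?_
  rw [hode r hr, show (2 : ℝ) / 3 - 1 = -(1 : ℝ) / 3 by norm_num]
  push_cast
  ring

lemma hasDerivWithinAt_deriv_rpow_two_div_three_of_solitonEnergy_zero
    (hE : ∀ r ∈ Ici (0 : ℝ), solitonEnergy (u r) (u' r) = 0) (r : ℝ) (hr : r ∈ Ici (0 : ℝ)) :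
    HasDerivWithinAt (fun r => 2 / 3 * (u r ^ (-(1 : ℝ) / 3) * u' r))
      (-(1 / 3 * u r ^ ((2 : ℝ) / 3))) (Ici 0) r := by
  have h := (((hu r hr).rpow_const (p := -(1 : ℝ) / 3) (.inl (hpos r hr).ne')).mul
    (hu' r hr)).const_mul (2 / 3)
  refine h.congr_deriv ?_
  have hEr := hE r hr
  rw [hode r hr]
  obtain ⟨p, hp, hup⟩ := exists_pow_three_eq (hpos r hr)
  rw [solitonEnergy, hup] at hEr
  rw [hup, show -(1 : ℝ) / 3 - 1 = -4 / 3 by norm_num]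
  simp only [pow_three_rpow_div_three hp.le] at hEr ⊢
  have h4 : p ^ (-4 : ℝ) = (p ^ 4)⁻¹ := by rw [rpow_neg hp.le]; norm_cast
  rw [h4, rpow_neg_one, rpow_two]
  rw [rpow_two] at hEr
  field_simp
  linear_combination (-2) * hEr

end SolitonODE

/-- There is no twice differentiable `u : [0, ∞) → ℝ` with
`u'' = (3/4)(u^{-1/3} - u)`, `u > 0` everywhere, `u'(0) > 0`, and the zero-energy
condition `3u(0)² + 4u'(0)² = 9u(0)^{2/3}`. -/
theorem stmt_8 :
    ¬ ∃ u u' u'' : ℝ → ℝ,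
      (∀ r ∈ Set.Ici (0 : ℝ), HasDerivWithinAt u (u' r) (Set.Ici 0) r) ∧
      (∀ r ∈ Set.Ici (0 : ℝ), HasDerivWithinAt u' (u'' r) (Set.Ici 0) r) ∧
      (∀ r ∈ Set.Ici (0 : ℝ),
        u'' r = (3 / 4) * ((u r) ^ (-(1 : ℝ) / 3) - u r)) ∧
      (∀ r ∈ Set.Ici (0 : ℝ), 0 < u r) ∧
      0 < u' 0 ∧
      3 * (u 0) ^ 2 + 4 * (u' 0) ^ 2 = 9 * (u 0) ^ ((2 : ℝ) / 3) := by
  rintro ⟨u, u', u'', hu, hu', hode, hpos, -, hE0⟩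
  have hE : ∀ r ∈ Ici (0 : ℝ), solitonEnergy (u r) (u' r) = 0 := fun r hr => by
    rw [solitonEnergy_eq_at_zero hu hu' hode hpos hr, solitonEnergy, hE0, sub_self]
  have hg : ∀ r ∈ Ici (0 : ℝ), HasDerivWithinAt (fun r => u r ^ ((2 : ℝ) / 3))
      (2 / 3 * (u r ^ (-(1 : ℝ) / 3) * u' r)) (Ici 0) r := fun r hr =>
    ((hu r hr).rpow_const (.inl (hpos r hr).ne')).congr_deriv (by norm_num; ring)
  set k : ℝ := (√3)⁻¹
  have hk : 0 < k := by positivity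
  have hk2 : k ^ 2 = 1 / 3 := by simp [k, inv_pow]
  have hsum := apply_zero_add_apply_pi_div_eq_zero_of_harmonic hk hg fun r hr =>
    (hasDerivWithinAt_deriv_rpow_two_div_three_of_solitonEnergy_zero hu hu' hode hpos hE r hr
      ).congr_deriv (by rw [hk2])
  exact (add_pos (rpow_pos_of_pos (hpos 0 self_mem_Ici) _)
    (rpow_pos_of_pos (hpos (π / k) (mem_Ici.2 (by positivity))) _)).ne' hsum
end

section
/- There is no twice differentiable function φ : [0, ∞) → ℝ with φ(0) = 0, φ'(0) > 0, φ(r) > 0 for all r > 0, satisfying φ(r)² + φ'(r)² + 2φ(r)φ''(r) = 1 for all r > 0. -/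
/-!
Multiplying the equation by `φ'` shows that `φ (φ'² + φ²/3 - 1)` is a first integral. It vanishes
at `r = 0`, so positivity of `φ` forces `φ'² + φ²/3 = 1` on `(0, ∞)`, and subtracting this from the
equation leaves the linear equation `φ'' = -φ/3`. With `ω = 1/√3`, the Wronskian
`ω φ cos (ω r) - φ' sin (ω r)` of `φ` against `sin (ω r)` is then constant, which gives
`φ (π/ω) = -φ 0 = 0`, contradicting positivity.
-/

open Set Real

lemma eq_of_hasDerivAt_eq_zero {f : ℝ → ℝ} {a b : ℝ} (hab : a ≤ b)
    (hf : ContinuousOn f (Icc a b)) (hf' : ∀ x ∈ Ioo a b, HasDerivAt f 0 x) : f b = f a := by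
  rcases hab.eq_or_lt with rfl | hlt
  · rfl
  obtain ⟨_, _, hslope⟩ := exists_hasDerivAt_eq_slope f (fun _ => 0) hlt hf hf'
  rw [eq_comm, div_eq_zero_iff, sub_eq_zero] at hslope
  exact hslope.resolve_right (sub_ne_zero.2 hlt.ne')

lemma apply_pi_div_eq_neg_apply_zero {φ φ' : ℝ → ℝ} {ω : ℝ} (hω : 0 < ω)
    (hφc : ContinuousOn φ (Icc 0 (π / ω))) (hφ'c : ContinuousOn φ' (Icc 0 (π / ω)))
    (hφ : ∀ x ∈ Ioo 0 (π / ω), HasDerivAt φ (φ' x) x)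
    (hφ' : ∀ x ∈ Ioo 0 (π / ω), HasDerivAt φ' (-ω ^ 2 * φ x) x) :
    φ (π / ω) = -φ 0 := by
  have hW := eq_of_hasDerivAt_eq_zero (f := fun r => ω * φ r * cos (ω * r) - φ' r * sin (ω * r))
    (b := π / ω) (by positivity) (by fun_prop) fun x hx => by
      have hsin := ((hasDerivAt_id x).const_mul ω).sin
      have hcos := ((hasDerivAt_id x).const_mul ω).cos
      refine ((((hφ x hx).const_mul ω).mul hcos).sub ((hφ' x hx).mul hsin)).congr_deriv ?_
      simp only [id]
      ring
  simp only [mul_div_cancel₀ π hω.ne', cos_pi, sin_pi, mul_zero, cos_zero, sin_zero, mul_neg_one,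
    mul_one, sub_zero, ← mul_neg] at hW
  exact neg_eq_iff_eq_neg.mp (mul_left_cancel₀ hω.ne' hW)

lemma hasDerivAt_first_integral {φ φ' φ'' : ℝ → ℝ} {r : ℝ} (hφ : HasDerivAt φ (φ' r) r)
    (hφ' : HasDerivAt φ' (φ'' r) r) (hode : φ r ^ 2 + φ' r ^ 2 + 2 * (φ r * φ'' r) = 1) :
    HasDerivAt (fun x => φ x * (φ' x ^ 2 + φ x ^ 2 / 3 - 1)) 0 r := by
  refine (hφ.mul (((hφ'.pow 2).add ((hφ.pow 2).div_const 3)).sub_const 1)).congr_deriv ?_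
  simp only [Pi.add_apply, Pi.pow_apply]
  linear_combination φ' r * hode

/-- There is no twice differentiable `φ : [0, ∞) → ℝ` with `φ(0) = 0`, `φ'(0) > 0`,
`φ > 0` on `(0, ∞)`, satisfying `φ² + (φ')² + 2φφ'' = 1` on `(0, ∞)`. -/
theorem stmt_9 :
    ¬ ∃ φ φ' φ'' : ℝ → ℝ,
      (∀ r ∈ Set.Ici (0 : ℝ), HasDerivWithinAt φ (φ' r) (Set.Ici 0) r) ∧
      (∀ r ∈ Set.Ici (0 : ℝ), HasDerivWithinAt φ' (φ'' r) (Set.Ici 0) r) ∧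
      φ 0 = 0 ∧ 0 < φ' 0 ∧
      (∀ r : ℝ, 0 < r → 0 < φ r) ∧
      (∀ r : ℝ, 0 < r →
        (φ r) ^ 2 + (φ' r) ^ 2 + 2 * (φ r * φ'' r) = 1) := by
  rintro ⟨φ, φ', φ'', hφ, hφ', h0, -, hpos, hode⟩
  have hφc : ContinuousOn φ (Ici 0) := fun r hr => (hφ r hr).continuousWithinAt
  have hφ'c : ContinuousOn φ' (Ici 0) := fun r hr => (hφ' r hr).continuousWithinAt
  have hφat (r : ℝ) (hr : 0 < r) : HasDerivAt φ (φ' r) r :=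
    (hφ r hr.le).hasDerivAt (Ici_mem_nhds hr)
  have hφ'at (r : ℝ) (hr : 0 < r) : HasDerivAt φ' (φ'' r) r :=
    (hφ' r hr.le).hasDerivAt (Ici_mem_nhds hr)
  have hFc : ContinuousOn (fun x => φ x * (φ' x ^ 2 + φ x ^ 2 / 3 - 1)) (Ici 0) := by fun_prop
  have henergy (r : ℝ) (hr : 0 < r) : φ' r ^ 2 + φ r ^ 2 / 3 - 1 = 0 := by
    have hF := eq_of_hasDerivAt_eq_zero hr.le (hFc.mono Icc_subset_Ici_self) fun x hx =>
      hasDerivAt_first_integral (hφat x hx.1) (hφ'at x hx.1) (hode x hx.1)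
    rw [h0, zero_mul] at hF
    exact (mul_eq_zero.1 hF).resolve_left (hpos r hr).ne'
  set ω := (√3)⁻¹
  have hω : 0 < ω := by positivity
  have hlinear (r : ℝ) (hr : 0 < r) : HasDerivAt φ' (-ω ^ 2 * φ r) r := by
    refine (hφ'at r hr).congr_deriv (mul_left_cancel₀ (hpos r hr).ne' ?_)
    rw [inv_pow, sq_sqrt zero_le_three]
    linear_combination (hode r hr - henergy r hr) / 2
  have hhalf := apply_pi_div_eq_neg_apply_zero hω (hφc.mono Icc_subset_Ici_self)
    (hφ'c.mono Icc_subset_Ici_self) (fun x hx => hφat x hx.1) fun x hx => hlinear x hx.1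
  exact (hpos (π / ω) (by positivity)).ne' (by rw [hhalf, h0, neg_zero])
end

section
/- For any f₀ ∈ ℝ, the functions λ(t) = 1 − t/2, h(t) = (2 − t)^{−1/2}, f(t) = f₀ (1 − t/2)^{−1/2} solve the cylinder soliton ODE system on [0, 2): λ(t) > 0, λ'(t) = −1 + λ(t)h(t)², h'(t) = h(t)/λ(t) − (3/2)h(t)³, and f'(t) = (1/2)h(t)²f(t) for all t ∈ [0, 2). In particular λ(0) = 1 and h(0)² = 1/2. -/
/-! With `λ = (2 - t)/2` and `h = (2 - t)^{-1/2}` we have `h² = 1/(2λ)`, so every right-hand side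
of the system is a multiple of a power of `2 - t`. Since `x ↦ x^{-1/2}` has derivative
`-(1/2) (x^{-1/2})³`, the three equations reduce to identities between such multiples. -/

open Real

lemma rpow_neg_half_sq {x : ℝ} (hx : 0 ≤ x) : (x ^ (-(1 : ℝ) / 2)) ^ 2 = x⁻¹ := by
  rw [← rpow_natCast, ← rpow_mul hx]
  norm_num [rpow_neg_one]

lemma HasDerivAt.rpow_neg_half {u : ℝ → ℝ} {u' t : ℝ} (hu : HasDerivAt u u' t) (ht : 0 < u t) :
    HasDerivAt (fun s => u s ^ (-(1 : ℝ) / 2)) (-(1 / 2) * u' * (u t ^ (-(1 : ℝ) / 2)) ^ 3) t := by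
  have hcube : u t ^ (-(1 : ℝ) / 2 - 1) = (u t ^ (-(1 : ℝ) / 2)) ^ 3 := by
    rw [← rpow_natCast, ← rpow_mul ht.le]
    norm_num
  refine (hu.rpow_const (Or.inl ht.ne')).congr_deriv ?_
  rw [hcube]
  ring

/-- For any `f₀`, the functions `λ(t) = 1 - t/2`, `h(t) = (2 - t)^{-1/2}`,
`f(t) = f₀ (1 - t/2)^{-1/2}` solve the cylinder soliton ODE system on `[0, 2)`;
moreover `λ(0) = 1` and `h(0)² = 1/2`. -/
theorem stmt_11 (f₀ : ℝ) (lam h f : ℝ → ℝ)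
    (hlam : lam = fun t => 1 - t / 2)
    (hh : h = fun t => (2 - t) ^ (-(1 : ℝ) / 2))
    (hf : f = fun t => f₀ * (1 - t / 2) ^ (-(1 : ℝ) / 2)) :
    (∀ t ∈ Set.Ico (0 : ℝ) 2,
      0 < lam t ∧
      HasDerivAt lam (-1 + lam t * (h t) ^ 2) t ∧
      HasDerivAt h (h t / lam t - (3 / 2) * (h t) ^ 3) t ∧
      HasDerivAt f ((1 / 2) * (h t) ^ 2 * f t) t) ∧
    lam 0 = 1 ∧ (h 0) ^ 2 = 1 / 2 := by
  subst hlam hh hf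
  refine ⟨fun t ⟨_, ht⟩ => ?_, by norm_num, by simpa using rpow_neg_half_sq zero_le_two⟩
  have hpos : 0 < 1 - t / 2 := by linarith
  have hbase : 0 < 2 - t := by linarith
  have hdlam : HasDerivAt (fun s : ℝ => 1 - s / 2) (-(1 / 2)) t := by
    simpa using ((hasDerivAt_id t).div_const 2).const_sub 1
  have hdbase : HasDerivAt (fun s : ℝ => 2 - s) (-1) t := by
    simpa using (hasDerivAt_id t).const_sub 2
  have hsq := rpow_neg_half_sq hbase.le
  refine ⟨hpos, hdlam.congr_deriv ?_, (hdbase.rpow_neg_half hbase).congr_deriv ?_,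
    ((hdlam.rpow_neg_half hpos).const_mul f₀).congr_deriv ?_⟩
  · rw [hsq]
    field_simp
    ring
  · rw [pow_succ _ 2, hsq]
    field_simp
    ring
  · rw [pow_succ _ 2, hsq, rpow_neg_half_sq hpos.le]
    field_simp
end

section
/- Let λ, h, f : [0, T) → ℝ solve the cylinder soliton ODE system (λ > 0, λ' = −1 + λh², h' = h/λ − (3/2)h³, f' = (1/2)h²f). Then for all t ∈ [0, T): 1/2 − λ(t)h(t)² = (1/2 − λ(0)h(0)²) · exp(−2∫₀ᵗ h(s)² ds). In particular, the sign of 1/2 − λh² is preserved, and if 0 < λ(0)h(0)² < 1/2 then λ(t)h(t)² is nondecreasing and satisfies λ(0)h(0)² ≤ λ(t)h(t)² < 1/2 for all t. -/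
/-!
Along a solution, `w = 1/2 - λh²` solves the linear equation `w' = -2h² w`, so
`w · exp (2∫₀ᵗ h²)` has vanishing right derivative and is constant. The sign statements follow
because the exponential is positive, and when `w(0) > 0` the monotonicity of `λh² = 1/2 - w`
comes from that of `t ↦ ∫₀ᵗ h²`.
-/

open Set MeasureTheory intervalIntegral

section LinearODE

variable {a T : ℝ} {k w : ℝ → ℝ}

theorem hasDerivWithinAt_integral_Ici_of_continuousOn_Ico (hk : ContinuousOn k (Ico a T))
    {x : ℝ} (hx : x ∈ Ico a T) :
    HasDerivWithinAt (fun t => ∫ s in a..t, k s) (k x) (Ici x) x := by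
  refine integral_hasDerivWithinAt_right (t := Ioi x)
    ((hk.mono (Icc_subset_Ico_right hx.2)).intervalIntegrable_of_Icc hx.1)
    ⟨Ioo x T, Ioo_mem_nhdsGT hx.2,
      (hk.mono fun y hy => ⟨hx.1.trans hy.1.le, hy.2⟩).aestronglyMeasurable measurableSet_Ioo⟩
    (((hk x hx).mono_of_mem_nhdsWithin (Ico_mem_nhdsGE_of_mem hx)).mono Ioi_subset_Ici_self)

theorem monotoneOn_integral_of_nonneg (hk : ContinuousOn k (Ico a T))
    (hk₀ : ∀ x ∈ Ico a T, 0 ≤ k x) : MonotoneOn (fun t => ∫ s in a..t, k s) (Ico a T) :=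
  fun _ ht₁ _ ht₂ hle =>
    integral_mono_interval le_rfl ht₁.1 hle
      (ae_restrict_of_forall_mem measurableSet_Ioc fun y hy =>
        hk₀ y ⟨hy.1.le, hy.2.trans_lt ht₂.2⟩)
      ((hk.mono (Icc_subset_Ico_right ht₂.2)).intervalIntegrable_of_Icc ht₂.1)

theorem eq_mul_exp_neg_integral_of_hasDerivWithinAt (hk : ContinuousOn k (Ico a T))
    (hw : ∀ x ∈ Ico a T, HasDerivWithinAt w (-(k x * w x)) (Ico a T) x) :
    ∀ t ∈ Ico a T, w t = w a * Real.exp (-∫ s in a..t, k s) := by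
  intro t ht
  set F : ℝ → ℝ := fun x => w x * Real.exp (∫ s in a..x, k s)
  have hsub : Icc a t ⊆ Ico a T := Icc_subset_Ico_right ht.2
  have hF_cont : ContinuousOn F (Icc a t) := by
    refine ContinuousOn.mul (fun x hx => (hw x (hsub hx)).continuousWithinAt.mono hsub)
      (Real.continuous_exp.comp_continuousOn ?_)
    rw [← uIcc_of_le ht.1]
    refine continuousOn_primitive_interval ?_
    rw [uIcc_of_le ht.1]
    exact (hk.mono hsub).integrableOn_compact isCompact_Icc
  have hF_deriv : ∀ x ∈ Ico a t, HasDerivWithinAt F 0 (Ici x) x := by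
    intro x hx
    have hxT : x ∈ Ico a T := ⟨hx.1, hx.2.trans ht.2⟩
    exact (((hw x hxT).mono_of_mem_nhdsWithin (Ico_mem_nhdsGE_of_mem hxT)).mul
      (hasDerivWithinAt_integral_Ici_of_continuousOn_Ico hk hxT).exp).congr_deriv (by ring)
  have hFt := constant_of_has_deriv_right_zero hF_cont hF_deriv t ⟨ht.1, le_rfl⟩
  simp only [F, integral_same, Real.exp_zero, mul_one] at hFt
  rw [← hFt, Real.exp_neg, mul_assoc, mul_inv_cancel₀ (Real.exp_ne_zero _), mul_one]

end LinearODE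

theorem hasDerivWithinAt_half_sub_mul_sq {lam h : ℝ → ℝ} {s : Set ℝ} {x : ℝ}
    (hlam : HasDerivWithinAt lam (-1 + lam x * h x ^ 2) s x)
    (hh : HasDerivWithinAt h (h x / lam x - 3 / 2 * h x ^ 3) s x) (hx : lam x ≠ 0) :
    HasDerivWithinAt (fun t => 1 / 2 - lam t * h t ^ 2)
      (-(2 * h x ^ 2 * (1 / 2 - lam x * h x ^ 2))) s x :=
  ((hlam.mul (hh.pow 2)).const_sub (1 / 2)).congr_deriv <| by
    simp only [Pi.pow_apply]
    field_simp
    ring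

theorem stmt_14_general (T : ℝ) (lam h : ℝ → ℝ)
    (hpos : ∀ t ∈ Set.Ico (0 : ℝ) T, 0 < lam t)
    (hlam : ∀ t ∈ Set.Ico (0 : ℝ) T,
      HasDerivWithinAt lam (-1 + lam t * (h t) ^ 2) (Set.Ico 0 T) t)
    (hh : ∀ t ∈ Set.Ico (0 : ℝ) T,
      HasDerivWithinAt h (h t / lam t - (3 / 2) * (h t) ^ 3) (Set.Ico 0 T) t) :
    (∀ t ∈ Set.Ico (0 : ℝ) T,
      1 / 2 - lam t * (h t) ^ 2
        = (1 / 2 - lam 0 * (h 0) ^ 2)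
            * Real.exp (-2 * ∫ s in (0 : ℝ)..t, (h s) ^ 2)) ∧
    (∀ t ∈ Set.Ico (0 : ℝ) T,
      (0 < 1 / 2 - lam 0 * (h 0) ^ 2 → 0 < 1 / 2 - lam t * (h t) ^ 2) ∧
      (1 / 2 - lam 0 * (h 0) ^ 2 = 0 → 1 / 2 - lam t * (h t) ^ 2 = 0) ∧
      (1 / 2 - lam 0 * (h 0) ^ 2 < 0 → 1 / 2 - lam t * (h t) ^ 2 < 0)) ∧
    ((0 < lam 0 * (h 0) ^ 2 ∧ lam 0 * (h 0) ^ 2 < 1 / 2) →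
      (∀ t₁ ∈ Set.Ico (0 : ℝ) T, ∀ t₂ ∈ Set.Ico (0 : ℝ) T, t₁ ≤ t₂ →
        lam t₁ * (h t₁) ^ 2 ≤ lam t₂ * (h t₂) ^ 2) ∧
      (∀ t ∈ Set.Ico (0 : ℝ) T,
        lam 0 * (h 0) ^ 2 ≤ lam t * (h t) ^ 2 ∧ lam t * (h t) ^ 2 < 1 / 2)) := by
  have hsq : ContinuousOn (fun s => h s ^ 2) (Ico 0 T) :=
    fun x hx => (hh x hx).continuousWithinAt.pow 2
  have hdecay : ∀ t ∈ Ico 0 T, 1 / 2 - lam t * h t ^ 2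
      = (1 / 2 - lam 0 * h 0 ^ 2) * Real.exp (-2 * ∫ s in (0 : ℝ)..t, h s ^ 2) := by
    intro t ht
    simpa only [intervalIntegral.integral_const_mul, neg_mul] using
      eq_mul_exp_neg_integral_of_hasDerivWithinAt (k := fun s => 2 * h s ^ 2)
        (continuousOn_const.mul hsq)
        (fun x hx => hasDerivWithinAt_half_sub_mul_sq (hlam x hx) (hh x hx) (hpos x hx).ne') t ht
  refine ⟨hdecay, fun t ht => ?_, fun ⟨_, hlt⟩ => ?_⟩
  · rw [hdecay t ht]
    have he := Real.exp_pos (-2 * ∫ s in (0 : ℝ)..t, h s ^ 2)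
    exact ⟨fun hc => mul_pos hc he, fun hc => by rw [hc, zero_mul],
      fun hc => mul_neg_of_neg_of_pos hc he⟩
  · have hc : 0 < 1 / 2 - lam 0 * h 0 ^ 2 := sub_pos.2 hlt
    have hmono : MonotoneOn (fun t => lam t * h t ^ 2) (Ico 0 T) := by
      intro t₁ ht₁ t₂ ht₂ hle
      have hexp := Real.exp_le_exp.2 <| mul_le_mul_of_nonpos_left
        (monotoneOn_integral_of_nonneg hsq (fun x _ => sq_nonneg (h x)) ht₁ ht₂ hle)
        (by norm_num : (-2 : ℝ) ≤ 0)
      linarith [hdecay t₁ ht₁, hdecay t₂ ht₂, mul_le_mul_of_nonneg_left hexp hc.le]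
    refine ⟨fun t₁ ht₁ t₂ ht₂ => hmono ht₁ ht₂, fun t ht => ⟨?_, ?_⟩⟩
    · exact hmono ⟨le_rfl, ht.1.trans_lt ht.2⟩ ht ht.1
    · linarith [hdecay t ht, mul_pos hc (Real.exp_pos (-2 * ∫ s in (0 : ℝ)..t, h s ^ 2))]

/-- Along a solution of the cylinder soliton ODE system on `[0, T)` one has
`1/2 - λ(t)h(t)² = (1/2 - λ(0)h(0)²) exp(-2∫₀ᵗ h²)`; in particular the sign of
`1/2 - λh²` is preserved, and if `0 < λ(0)h(0)² < 1/2` then `λh²` is nondecreasing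
with `λ(0)h(0)² ≤ λ(t)h(t)² < 1/2`. -/
theorem stmt_14 (T : ℝ) (lam h f : ℝ → ℝ)
    (hpos : ∀ t ∈ Set.Ico (0 : ℝ) T, 0 < lam t)
    (hlam : ∀ t ∈ Set.Ico (0 : ℝ) T,
      HasDerivWithinAt lam (-1 + lam t * (h t) ^ 2) (Set.Ico 0 T) t)
    (hh : ∀ t ∈ Set.Ico (0 : ℝ) T,
      HasDerivWithinAt h (h t / lam t - (3 / 2) * (h t) ^ 3) (Set.Ico 0 T) t)
    (hf : ∀ t ∈ Set.Ico (0 : ℝ) T,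
      HasDerivWithinAt f ((1 / 2) * (h t) ^ 2 * f t) (Set.Ico 0 T) t) :
    (∀ t ∈ Set.Ico (0 : ℝ) T,
      1 / 2 - lam t * (h t) ^ 2
        = (1 / 2 - lam 0 * (h 0) ^ 2)
            * Real.exp (-2 * ∫ s in (0 : ℝ)..t, (h s) ^ 2)) ∧
    (∀ t ∈ Set.Ico (0 : ℝ) T,
      (0 < 1 / 2 - lam 0 * (h 0) ^ 2 → 0 < 1 / 2 - lam t * (h t) ^ 2) ∧
      (1 / 2 - lam 0 * (h 0) ^ 2 = 0 → 1 / 2 - lam t * (h t) ^ 2 = 0) ∧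
      (1 / 2 - lam 0 * (h 0) ^ 2 < 0 → 1 / 2 - lam t * (h t) ^ 2 < 0)) ∧
    ((0 < lam 0 * (h 0) ^ 2 ∧ lam 0 * (h 0) ^ 2 < 1 / 2) →
      (∀ t₁ ∈ Set.Ico (0 : ℝ) T, ∀ t₂ ∈ Set.Ico (0 : ℝ) T, t₁ ≤ t₂ →
        lam t₁ * (h t₁) ^ 2 ≤ lam t₂ * (h t₂) ^ 2) ∧
      (∀ t ∈ Set.Ico (0 : ℝ) T,
        lam 0 * (h 0) ^ 2 ≤ lam t * (h t) ^ 2 ∧ lam t * (h t) ^ 2 < 1 / 2)) :=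
  stmt_14_general T lam h hpos hlam hh
end

section
/- Let T < ∞ and let λ, h, f : [0, T) → ℝ solve the cylinder soliton ODE system (λ > 0, λ' = −1 + λh², h' = h/λ − (3/2)h³, f' = (1/2)h²f) with h(0) ≠ 0 and λ(t) → 0 as t → T⁻. Then λ(t)h(t)² → 1/2 as t → T⁻. -/
/-! Put `x = λh²`. Then `x' = h²(1 - 2x)`, so `(x - 1/2)²` is nonincreasing and `x` cannot cross
`1/2`; hence `x ≥ m := min (x 0) (1/2) > 0`. In particular `λ' ≥ -1`, which together with `λ → 0`
gives `λ(t) ≤ T - t`, so `h² = x / λ ≥ m / (T - t)`. Since `((x - 1/2)²)' = -4h²(x - 1/2)²`, this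
yields `(x - 1/2)² ≤ C (T - t)^(4m) → 0`. -/

open Set Filter Topology

theorem min_le_of_antitoneOn_sq_sub {x : ℝ → ℝ} {a b c : ℝ} (hab : a ≤ b)
    (hx : ContinuousOn x (Icc a b)) (hu : AntitoneOn (fun s => (x s - c) ^ 2) (Icc a b)) :
    min (x a) c ≤ x b := by
  have hba := hu (left_mem_Icc.2 hab) (right_mem_Icc.2 hab) hab
  rcases le_or_gt (x a) c with hac | hca
  · rw [min_eq_left hac]
    have := (abs_le_of_sq_le_sq' (hba.trans_eq (by ring)) (sub_nonneg.2 hac)).1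
    linarith
  · rw [min_eq_right hca.le]
    by_contra! hbc
    -- once `x` takes the value `c`, the antitone square pins it there
    obtain ⟨s, hs, hxs⟩ := intermediate_value_Icc' hab hx ⟨hbc.le, hca.le⟩
    have hsb : (x b - c) ^ 2 ≤ (x s - c) ^ 2 := hu hs (right_mem_Icc.2 hab) hs.2
    rw [hxs, sub_self] at hsb
    nlinarith

theorem le_mul_div_rpow_of_deriv_le {u u' : ℝ → ℝ} {a T k : ℝ} (hu : ContinuousOn u (Ico a T))
    (hu' : ∀ s ∈ Ioo a T, HasDerivAt u (u' s) s)
    (hle : ∀ s ∈ Ioo a T, u' s ≤ -k * u s / (T - s)) {t : ℝ} (ht : t ∈ Ico a T) :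
    u t ≤ u a * ((T - t) / (T - a)) ^ k := by
  have hw : AntitoneOn (fun s => u s * (T - s) ^ (-k)) (Ico a T) := by
    refine antitoneOn_of_hasDerivWithinAt_nonpos (convex_Ico a T)
      (hu.mul ((continuousOn_const.sub continuousOn_id).rpow_const
        fun s hs => Or.inl (sub_pos.2 hs.2).ne'))
      (f' := fun s => u' s * (T - s) ^ (-k) + u s * (-1 * -k * (T - s) ^ (-k - 1))) ?_ ?_
    · intro s hs
      rw [interior_Ico] at hs
      exact ((hu' s hs).mul (((hasDerivAt_id s).const_sub T).rpow_const
        (Or.inl (sub_pos.2 hs.2).ne'))).hasDerivWithinAt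
    · intro s hs
      rw [interior_Ico] at hs
      have hTs : 0 < T - s := sub_pos.2 hs.2
      have hk := hle s hs
      rw [le_div_iff₀ hTs] at hk
      rw [Real.rpow_sub_one hTs.ne']
      have hp : 0 < (T - s) ^ (-k) := Real.rpow_pos_of_pos hTs _
      field_simp
      nlinarith
  have hTt : 0 < T - t := sub_pos.2 ht.2
  have hTa : 0 < T - a := by linarith [ht.1, ht.2]
  have hwt := hw (left_mem_Ico.2 (ht.1.trans_lt ht.2)) ht ht.1
  simp only [Real.rpow_neg hTt.le, Real.rpow_neg hTa.le] at hwt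
  calc u t ≤ u a * ((T - a) ^ k)⁻¹ * (T - t) ^ k := (mul_inv_le_iff₀ (by positivity)).1 hwt
    _ = u a * ((T - t) / (T - a)) ^ k := by rw [Real.div_rpow hTt.le hTa.le]; ring

theorem tendsto_nhdsLT_zero_of_deriv_le {u u' : ℝ → ℝ} {a T k : ℝ} (ha : a < T) (hk : 0 < k)
    (hu : ContinuousOn u (Ico a T)) (hu' : ∀ s ∈ Ioo a T, HasDerivAt u (u' s) s)
    (hle : ∀ s ∈ Ioo a T, u' s ≤ -k * u s / (T - s)) (hu0 : ∀ s ∈ Ioo a T, 0 ≤ u s) :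
    Tendsto u (𝓝[<] T) (𝓝 0) := by
  have hbound : Tendsto (fun t => u a * ((T - t) / (T - a)) ^ k) (𝓝[<] T) (𝓝 0) := by
    have hc : ContinuousAt (fun t => u a * ((T - t) / (T - a)) ^ k) T := by
      fun_prop (disch := exact Or.inr hk.le)
    simpa [Real.zero_rpow hk.ne'] using hc.tendsto.mono_left nhdsWithin_le_nhds
  refine tendsto_of_tendsto_of_tendsto_of_le_of_le' tendsto_const_nhds hbound ?_ ?_ <;>
    filter_upwards [Ioo_mem_nhdsLT ha] with t ht
  · exact hu0 t ht
  · exact le_mul_div_rpow_of_deriv_le hu hu' hle (Ioo_subset_Ico_self ht)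

structure CylinderSoliton (T : ℝ) (lam h : ℝ → ℝ) : Prop where
  pos : ∀ t ∈ Ico (0 : ℝ) T, 0 < lam t
  hasDerivWithinAt_lam : ∀ t ∈ Ico (0 : ℝ) T,
    HasDerivWithinAt lam (-1 + lam t * h t ^ 2) (Ico 0 T) t
  hasDerivWithinAt_h : ∀ t ∈ Ico (0 : ℝ) T,
    HasDerivWithinAt h (h t / lam t - (3 / 2) * h t ^ 3) (Ico 0 T) t

namespace CylinderSoliton

variable {T : ℝ} {lam h : ℝ → ℝ}

theorem continuousOn_lam (S : CylinderSoliton T lam h) : ContinuousOn lam (Ico 0 T) :=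
  fun t ht => (S.hasDerivWithinAt_lam t ht).continuousWithinAt

theorem continuousOn_lam_mul_sq (S : CylinderSoliton T lam h) :
    ContinuousOn (fun t => lam t * h t ^ 2) (Ico 0 T) :=
  S.continuousOn_lam.mul <| ContinuousOn.pow
    (fun t ht => (S.hasDerivWithinAt_h t ht).continuousWithinAt) 2

theorem hasDerivAt_lam_mul_sq (S : CylinderSoliton T lam h) {t : ℝ} (ht : t ∈ Ioo 0 T) :
    HasDerivAt (fun s => lam s * h s ^ 2) (h t ^ 2 * (1 - 2 * (lam t * h t ^ 2))) t := by
  have hI : t ∈ Ico 0 T := Ioo_subset_Ico_self ht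
  have hn : Ico 0 T ∈ 𝓝 t := Ico_mem_nhds ht.1 ht.2
  have hl := (S.hasDerivWithinAt_lam t hI).hasDerivAt hn
  have hh := (S.hasDerivWithinAt_h t hI).hasDerivAt hn
  refine (hl.fun_mul (hh.fun_pow 2)).congr_deriv ?_
  field_simp [(S.pos t hI).ne']
  ring

theorem hasDerivAt_sq_lam_mul_sq_sub_half (S : CylinderSoliton T lam h) {t : ℝ}
    (ht : t ∈ Ioo 0 T) :
    HasDerivAt (fun s => (lam s * h s ^ 2 - 1 / 2) ^ 2)
      (-4 * h t ^ 2 * (lam t * h t ^ 2 - 1 / 2) ^ 2) t :=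
  (((S.hasDerivAt_lam_mul_sq ht).sub_const (1 / 2)).fun_pow 2).congr_deriv (by ring)

theorem antitoneOn_sq_lam_mul_sq_sub_half (S : CylinderSoliton T lam h) :
    AntitoneOn (fun t => (lam t * h t ^ 2 - 1 / 2) ^ 2) (Ico 0 T) := by
  refine antitoneOn_of_hasDerivWithinAt_nonpos (convex_Ico 0 T)
    ((S.continuousOn_lam_mul_sq.sub continuousOn_const).pow 2)
    (f' := fun t => -4 * h t ^ 2 * (lam t * h t ^ 2 - 1 / 2) ^ 2) ?_ ?_
  · intro t ht
    rw [interior_Ico] at ht ⊢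
    exact (S.hasDerivAt_sq_lam_mul_sq_sub_half ht).hasDerivWithinAt
  · intro t _
    have := mul_nonneg (sq_nonneg (h t)) (sq_nonneg (lam t * h t ^ 2 - 1 / 2))
    linarith

theorem min_le_lam_mul_sq (S : CylinderSoliton T lam h) {t : ℝ} (ht : t ∈ Ico 0 T) :
    min (lam 0 * h 0 ^ 2) (1 / 2) ≤ lam t * h t ^ 2 := by
  have hsub : Icc 0 t ⊆ Ico 0 T := Icc_subset_Ico_right ht.2
  exact min_le_of_antitoneOn_sq_sub ht.1 (S.continuousOn_lam_mul_sq.mono hsub)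
    (S.antitoneOn_sq_lam_mul_sq_sub_half.mono hsub)

theorem lam_le_sub (S : CylinderSoliton T lam h) (hlim : Tendsto lam (𝓝[<] T) (𝓝 0))
    {t : ℝ} (ht : t ∈ Ico 0 T) : lam t ≤ T - t := by
  have hmono : MonotoneOn (fun s => lam s + s) (Ico 0 T) := by
    refine monotoneOn_of_hasDerivWithinAt_nonneg (convex_Ico 0 T)
      (S.continuousOn_lam.add continuousOn_id) (f' := fun s => -1 + lam s * h s ^ 2 + 1) ?_ ?_
    · intro s hs
      exact ((S.hasDerivWithinAt_lam s (interior_subset hs)).add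
        (hasDerivWithinAt_id s _)).mono interior_subset
    · intro s hs
      have hI := interior_subset hs
      have h0 : 0 ≤ lam 0 * h 0 ^ 2 :=
        mul_nonneg (S.pos 0 ⟨le_rfl, hI.1.trans_lt hI.2⟩).le (sq_nonneg _)
      have := (S.min_le_lam_mul_sq hI).trans' (le_min h0 (by norm_num))
      linarith
  have hT : Tendsto (fun s => lam s + s) (𝓝[<] T) (𝓝 (0 + T)) :=
    hlim.add (tendsto_id.mono_left nhdsWithin_le_nhds)
  have hle : lam t + t ≤ 0 + T := ge_of_tendsto hT <| by
    filter_upwards [Ioo_mem_nhdsLT ht.2] with s hs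
    exact hmono ht ⟨ht.1.trans hs.1.le, hs.2⟩ hs.1.le
  linarith

theorem tendsto_lam_mul_sq (S : CylinderSoliton T lam h) (hT : 0 < T) (hh0 : h 0 ≠ 0)
    (hlim : Tendsto lam (𝓝[<] T) (𝓝 0)) :
    Tendsto (fun t => lam t * h t ^ 2) (𝓝[<] T) (𝓝 (1 / 2)) := by
  set m := min (lam 0 * h 0 ^ 2) (1 / 2)
  have hm : 0 < m := lt_min (mul_pos (S.pos 0 ⟨le_rfl, hT⟩) (by positivity)) (by norm_num)
  have hsq : Tendsto (fun t => (lam t * h t ^ 2 - 1 / 2) ^ 2) (𝓝[<] T) (𝓝 0) := by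
    refine tendsto_nhdsLT_zero_of_deriv_le hT (k := 4 * m) (by positivity)
      ((S.continuousOn_lam_mul_sq.sub continuousOn_const).pow 2)
      (fun s hs => S.hasDerivAt_sq_lam_mul_sq_sub_half hs) (fun s hs => ?_)
      (fun s _ => sq_nonneg _)
    have hI : s ∈ Ico 0 T := Ioo_subset_Ico_self hs
    have hmx := S.min_le_lam_mul_sq hI
    have hlT := S.lam_le_sub hlim hI
    rw [le_div_iff₀ (sub_pos.2 hs.2)]
    nlinarith [sq_nonneg (h s), sq_nonneg (lam s * h s ^ 2 - 1 / 2),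
      mul_le_mul_of_nonneg_right hlT (sq_nonneg (h s))]
  have habs := hsq.sqrt
  simp only [Real.sqrt_sq_eq_abs, Real.sqrt_zero] at habs
  exact tendsto_sub_nhds_zero_iff.1 ((tendsto_zero_iff_abs_tendsto_zero _).2 habs)

end CylinderSoliton

theorem stmt_17_general (T : ℝ) (hT : 0 < T) (lam h : ℝ → ℝ)
    (hpos : ∀ t ∈ Set.Ico (0 : ℝ) T, 0 < lam t)
    (hlam : ∀ t ∈ Set.Ico (0 : ℝ) T,
      HasDerivWithinAt lam (-1 + lam t * (h t) ^ 2) (Set.Ico 0 T) t)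
    (hh : ∀ t ∈ Set.Ico (0 : ℝ) T,
      HasDerivWithinAt h (h t / lam t - (3 / 2) * (h t) ^ 3) (Set.Ico 0 T) t)
    (hh0 : h 0 ≠ 0)
    (hlim : Filter.Tendsto lam (nhdsWithin T (Set.Ico 0 T)) (nhds 0)) :
    Filter.Tendsto (fun t => lam t * (h t) ^ 2)
      (nhdsWithin T (Set.Ico 0 T)) (nhds (1 / 2)) := by
  rw [nhdsWithin_Ico_eq_nhdsLT hT] at hlim ⊢
  exact (CylinderSoliton.mk hpos hlam hh).tendsto_lam_mul_sq hT hh0 hlim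

/-- If the cylinder soliton ODE system has a solution on `[0, T)`, `T < ∞`, with
`h(0) ≠ 0` and `λ(t) → 0` as `t → T⁻`, then `λ(t)h(t)² → 1/2` as `t → T⁻`. -/
theorem stmt_17 (T : ℝ) (hT : 0 < T) (lam h f : ℝ → ℝ)
    (hpos : ∀ t ∈ Set.Ico (0 : ℝ) T, 0 < lam t)
    (hlam : ∀ t ∈ Set.Ico (0 : ℝ) T,
      HasDerivWithinAt lam (-1 + lam t * (h t) ^ 2) (Set.Ico 0 T) t)
    (hh : ∀ t ∈ Set.Ico (0 : ℝ) T,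
      HasDerivWithinAt h (h t / lam t - (3 / 2) * (h t) ^ 3) (Set.Ico 0 T) t)
    (hf : ∀ t ∈ Set.Ico (0 : ℝ) T,
      HasDerivWithinAt f ((1 / 2) * (h t) ^ 2 * f t) (Set.Ico 0 T) t)
    (hh0 : h 0 ≠ 0)
    (hlim : Filter.Tendsto lam (nhdsWithin T (Set.Ico 0 T)) (nhds 0)) :
    Filter.Tendsto (fun t => lam t * (h t) ^ 2)
      (nhdsWithin T (Set.Ico 0 T)) (nhds (1 / 2)) :=
  stmt_17_general T hT lam h hpos hlam hh hh0 hlim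
end

section
/- Let T < ∞ and let λ, h, f : [0, T) → ℝ solve the cylinder soliton ODE system (λ > 0, λ' = −1 + λh², h' = h/λ − (3/2)h³, f' = (1/2)h²f) with h(0) ≠ 0 and λ(t) → 0 as t → T⁻. Then ∫₀^T h(s)² ds = +∞ (the improper integral diverges). -/
/-!
The quantity `w = λ h²` satisfies `w' = h² (1 - 2w)`, so `(1 - 2w) · exp (2 ∫₀ᵗ h²)` is conserved
and `w` stays above `c = min (w 0) (1/2) > 0`. Since `λ' ≥ -1` and `λ → 0` at `T`, also
`λ t ≤ T - t`. Hence `h² = w / λ ≥ c / (T - t)`, whose integral over `[0, T)` diverges.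
-/

open MeasureTheory Set Filter Topology Real

theorem le_sub_of_neg_one_le_deriv_of_tendsto_zero {a b : ℝ} {g g' : ℝ → ℝ}
    (hg : ∀ t ∈ Ico a b, HasDerivWithinAt g (g' t) (Ico a b) t)
    (hg' : ∀ t ∈ Ico a b, -1 ≤ g' t) (hlim : Tendsto g (𝓝[Ico a b] b) (𝓝 0))
    {t : ℝ} (ht : t ∈ Ico a b) : g t ≤ b - t := by
  have hmono : MonotoneOn (fun u => g u + u) (Ico a b) := by
    refine monotoneOn_of_hasDerivWithinAt_nonneg (convex_Ico a b)
      (fun u hu => (hg u hu).continuousWithinAt.add continuousWithinAt_id)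
      (fun u hu => ((hg u (interior_subset hu)).mono interior_subset).add (hasDerivWithinAt_id u _))
      (fun u hu => ?_)
    linarith [hg' u (interior_subset hu)]
  have := right_nhdsWithin_Ico_neBot (ht.1.trans_lt ht.2)
  have hsum : Tendsto (fun u => g u + u) (𝓝[Ico a b] b) (𝓝 (0 + b)) :=
    hlim.add (tendsto_id.mono_left nhdsWithin_le_nhds)
  have hle : g t + t ≤ 0 + b := ge_of_tendsto hsum <| by
    filter_upwards [self_mem_nhdsWithin, (eventually_ge_nhds ht.2).filter_mono nhdsWithin_le_nhds]
      with u hu htu using hmono ht hu htu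
  linarith

theorem ContinuousOn.hasDerivWithinAt_intervalIntegral_Icc {a b t : ℝ} {q : ℝ → ℝ}
    (hq : ContinuousOn q (Icc a b)) (ht : t ∈ Icc a b) :
    HasDerivWithinAt (fun u => ∫ s in a..u, q s) (q t) (Icc a b) t := by
  have : Fact (t ∈ Icc a b) := ⟨ht⟩
  have hint : IntervalIntegrable q volume a t :=
    (hq.mono (by rw [uIcc_of_le ht.1]; exact Icc_subset_Icc_right ht.2)).intervalIntegrable
  exact intervalIntegral.integral_hasDerivWithinAt_right hint
    ⟨Icc a b, self_mem_nhdsWithin, hq.aestronglyMeasurable measurableSet_Icc⟩ (hq t ht)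

theorem mul_exp_integral_eq_of_hasDerivWithinAt {a b : ℝ} (hab : a ≤ b) {y q : ℝ → ℝ}
    (hq : ContinuousOn q (Icc a b))
    (hy : ∀ t ∈ Icc a b, HasDerivWithinAt y (-(q t * y t)) (Icc a b) t) :
    y b * exp (∫ s in a..b, q s) = y a := by
  have hz : ∀ t ∈ Icc a b,
      HasDerivWithinAt (fun u => y u * exp (∫ s in a..u, q s)) 0 (Icc a b) t := fun t ht =>
    ((hy t ht).mul (hq.hasDerivWithinAt_intervalIntegral_Icc ht).exp).congr_deriv (by ring)
  simpa using constant_of_has_deriv_right_zero (fun t ht => (hz t ht).continuousWithinAt)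
    (fun t ht => (hz t (Ico_subset_Icc_self ht)).mono_of_mem_nhdsWithin
      (Icc_mem_nhdsGE_of_mem ht)) b (right_mem_Icc.2 hab)

theorem hasDerivWithinAt_one_sub_two_mul_lam_mul_sq {lam h : ℝ → ℝ} {s : Set ℝ} {t : ℝ}
    (hlt : lam t ≠ 0) (hlam : HasDerivWithinAt lam (-1 + lam t * h t ^ 2) s t)
    (hh : HasDerivWithinAt h (h t / lam t - 3 / 2 * h t ^ 3) s t) :
    HasDerivWithinAt (fun u => 1 - 2 * (lam u * h u ^ 2))
      (-(2 * h t ^ 2 * (1 - 2 * (lam t * h t ^ 2)))) s t := by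
  refine (((hlam.fun_mul (hh.fun_pow 2)).const_mul 2).const_sub 1).congr_deriv ?_
  field_simp
  ring

theorem min_le_of_one_sub_two_mul_mul_eq {w₀ w E : ℝ} (hE : 1 ≤ E)
    (h : (1 - 2 * w) * E = 1 - 2 * w₀) : min w₀ (1 / 2) ≤ w := by
  rcases le_or_gt w₀ (1 / 2) with hw₀ | hw₀
  · nlinarith [min_le_left w₀ (1 / 2)]
  · nlinarith [min_le_right w₀ (1 / 2)]

theorem lintegral_ofReal_div_sub_eq_top {a b c : ℝ} (hab : a < b) (hc : 0 < c) :
    ∫⁻ s in Ico a b, ENNReal.ofReal (c / (b - s)) = ⊤ := by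
  by_contra hfin
  have hnonneg : ∀ᵐ s ∂volume.restrict (Ico a b), 0 ≤ c / (b - s) :=
    (ae_restrict_iff' measurableSet_Ico).2 <| Eventually.of_forall fun s hs =>
      div_nonneg hc.le (sub_nonneg.2 hs.2.le)
  have hint : IntegrableOn (fun s => c / (b - s)) (Ico a b) :=
    ⟨(by fun_prop : Measurable fun s => c / (b - s)).aestronglyMeasurable,
      (hasFiniteIntegral_iff_ofReal hnonneg).2 (lt_top_iff_ne_top.2 hfin)⟩
  have hinv : IntervalIntegrable (fun s => (s - b)⁻¹) volume a b := by
    refine (intervalIntegrable_iff_integrableOn_Ico_of_le hab.le).2 ?_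
    refine IntegrableOn.congr_fun (hint.const_mul (-c⁻¹)) (fun s hs => ?_) measurableSet_Ico
    have : s - b ≠ 0 := sub_ne_zero.2 hs.2.ne
    rw [← neg_sub s b]
    field_simp
  simp [hab.ne, hab.le] at hinv

theorem stmt_19_general (T : ℝ) (hT : 0 < T) (lam h : ℝ → ℝ)
    (hpos : ∀ t ∈ Set.Ico (0 : ℝ) T, 0 < lam t)
    (hlam : ∀ t ∈ Set.Ico (0 : ℝ) T,
      HasDerivWithinAt lam (-1 + lam t * (h t) ^ 2) (Set.Ico 0 T) t)
    (hh : ∀ t ∈ Set.Ico (0 : ℝ) T,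
      HasDerivWithinAt h (h t / lam t - (3 / 2) * (h t) ^ 3) (Set.Ico 0 T) t)
    (hh0 : h 0 ≠ 0)
    (hlim : Filter.Tendsto lam (nhdsWithin T (Set.Ico 0 T)) (nhds 0)) :
    ∫⁻ s in Set.Ico (0 : ℝ) T, ENNReal.ofReal ((h s) ^ 2) = ⊤ := by
  have hlam_le : ∀ t ∈ Ico 0 T, lam t ≤ T - t := fun t ht =>
    le_sub_of_neg_one_le_deriv_of_tendsto_zero hlam
      (fun s hs => by nlinarith [hpos s hs, sq_nonneg (h s)]) hlim ht
  have hconserved : ∀ t ∈ Ico 0 T, (1 - 2 * (lam t * h t ^ 2)) *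
      exp (∫ s in 0..t, 2 * h s ^ 2) = 1 - 2 * (lam 0 * h 0 ^ 2) := by
    intro t ht
    have hsub : Icc 0 t ⊆ Ico 0 T := Icc_subset_Ico_right ht.2
    have hcont : ContinuousOn h (Ico 0 T) := fun s hs => (hh s hs).continuousWithinAt
    refine mul_exp_integral_eq_of_hasDerivWithinAt ht.1
      (y := fun u => 1 - 2 * (lam u * h u ^ 2)) (q := fun s => 2 * h s ^ 2)
      (((hcont.pow 2).const_mul 2).mono hsub) fun s hs => ?_
    exact (hasDerivWithinAt_one_sub_two_mul_lam_mul_sq (hpos s (hsub hs)).ne'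
      (hlam s (hsub hs)) (hh s (hsub hs))).mono hsub
  set c := min (lam 0 * h 0 ^ 2) (1 / 2)
  have hc : 0 < c := lt_min (mul_pos (hpos 0 ⟨le_rfl, hT⟩) (by positivity)) one_half_pos
  have hbound : ∀ t ∈ Ico 0 T, c / (T - t) ≤ h t ^ 2 := by
    intro t ht
    have hw : c ≤ lam t * h t ^ 2 := min_le_of_one_sub_two_mul_mul_eq
      (one_le_exp (intervalIntegral.integral_nonneg ht.1 fun s _ => by positivity))
      (hconserved t ht)
    calc c / (T - t) ≤ c / lam t := div_le_div_of_nonneg_left hc.le (hpos t ht) (hlam_le t ht)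
      _ ≤ h t ^ 2 := by rw [div_le_iff₀ (hpos t ht)]; linarith
  rw [← top_le_iff, ← lintegral_ofReal_div_sub_eq_top hT hc]
  exact setLIntegral_mono' measurableSet_Ico fun t ht => ENNReal.ofReal_le_ofReal (hbound t ht)

/-- If the cylinder soliton ODE system has a solution on `[0, T)`, `T < ∞`, with
`h(0) ≠ 0` and `λ(t) → 0` as `t → T⁻`, then `∫₀^T h² = +∞`. -/
theorem stmt_19 (T : ℝ) (hT : 0 < T) (lam h f : ℝ → ℝ)
    (hpos : ∀ t ∈ Set.Ico (0 : ℝ) T, 0 < lam t)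
    (hlam : ∀ t ∈ Set.Ico (0 : ℝ) T,
      HasDerivWithinAt lam (-1 + lam t * (h t) ^ 2) (Set.Ico 0 T) t)
    (hh : ∀ t ∈ Set.Ico (0 : ℝ) T,
      HasDerivWithinAt h (h t / lam t - (3 / 2) * (h t) ^ 3) (Set.Ico 0 T) t)
    (hf : ∀ t ∈ Set.Ico (0 : ℝ) T,
      HasDerivWithinAt f ((1 / 2) * (h t) ^ 2 * f t) (Set.Ico 0 T) t)
    (hh0 : h 0 ≠ 0)
    (hlim : Filter.Tendsto lam (nhdsWithin T (Set.Ico 0 T)) (nhds 0)) :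
    ∫⁻ s in Set.Ico (0 : ℝ) T, ENNReal.ofReal ((h s) ^ 2) = ⊤ :=
  stmt_19_general T hT lam h hpos hlam hh hh0 hlim
end
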